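/- Let γ be a permutation of {1,…,k} arranging the strings of M in colexicographic order, i.e., such that the reversed strings T_{γ(1)}^rev, …, T_{γ(k)}^rev are in lexicographic order. Then runs(mdolBWT(M,γ)) ≤ r_OPT + 2·c_M, where r_OPT = min over all permutations σ of {1,…,k} of runs(mdolBWT(M,σ)), and c_M is the number of interesting intervals of M. -/

import Mathlib

/-- The `j`-th rotation of a string. -/
def rot {β : Type*} (l : List β) (j : ℕ) : List β := l.drop j ++ l.take j

/-- Nonstrict lexicographic order on strings. -/
def listLe {β : Type*} [LT β] (X Y : List β) : Prop := X = Y ∨ List.Lex (· < ·) X Y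

/-- The character preceding the suffix `U` in `Ti`: the last character of `W` where
`Ti = W·U`, and the sentinel `⊥` (i.e. `$`) if `U = Ti`. -/
def precChar {α : Type*} (Ti U : List α) : WithBot α :=
  match (Ti.take (Ti.length - U.length)).getLast? with
  | none => ⊥
  | some a => (a : WithBot α)

/-- `U` defines an interesting interval: `U` is a suffix of two different input strings
and the characters preceding these two occurrences differ. -/
def Interesting {α : Type*} {k : ℕ} (T : Fin k → List α) (U : List α) : Prop :=
  ∃ i j : Fin k, i ≠ j ∧ U <:+ T i ∧ U <:+ T j ∧ precChar (T i) U ≠ precChar (T j) U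

/-- The string `W_σ = T_{σ(1)}$_1 T_{σ(2)}$_2 ⋯ T_{σ(k)}$_k` over the alphabet
`Fin k ⊕ₗ α` (separators `toLex (Sum.inl p)` are pairwise distinct, increasing, and
smaller than every symbol of `Σ`). -/
def mWord {α : Type*} {k : ℕ} (T : Fin k → List α) (σ : Equiv.Perm (Fin k)) :
    List (Fin k ⊕ₗ α) :=
  (List.finRange k).flatMap fun p =>
    ((T (σ p)).map fun a => toLex (Sum.inr a)) ++ [toLex (Sum.inl p)]

/-- The multiset (list) of all rotations of `W_σ`. -/
def mRots {α : Type*} {k : ℕ} (T : Fin k → List α) (σ : Equiv.Perm (Fin k)) :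
    List (List (Fin k ⊕ₗ α)) :=
  (List.range (mWord T σ).length).map (rot (mWord T σ))

/-- The last character of a rotation, with every separator replaced by the single
sentinel `$` (here `⊥`). -/
def lastOut {α : Type*} {k : ℕ} (R : List (Fin k ⊕ₗ α)) : WithBot α :=
  match R.getLast? with
  | none => ⊥
  | some b => match ofLex b with
    | Sum.inl _ => ⊥
    | Sum.inr a => (a : WithBot α)

/-- The multidollar BWT read off from a lexicographically sorted list `L` of the
rotations of `W_σ`. -/
def mdolOf {α : Type*} {k : ℕ} (L : List (List (Fin k ⊕ₗ α))) : List (WithBot α) :=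
  L.map lastOut

/-- The number of runs (maximal blocks of consecutive equal characters) of a string. -/
def runs {γ : Type*} [DecidableEq γ] (L : List γ) : ℕ :=
  (L.destutter (· ≠ ·)).length

/-!
Sorting the rotations of `W_σ` groups them by the suffix `U` of the input strings that they
start with: the rotations beginning with `U·$` form one interval, the intervals appear in the
lexicographic order of `U`, and inside the interval of `U` the rotations are ordered by their
separator, i.e. by the position in `σ` of the strings ending with `U`. So `mdolBWT(M,σ)` is the
concatenation, over the distinct suffixes `U`, of the characters preceding `U` in these strings,
listed in `σ`-order, and changing `σ` only permutes each block. When `U` is not interesting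
its block is constant, hence the same for `γ` and `σ`; when it is, the colexicographic order `γ`
lists the preceding characters sorted, so its block has as few runs as any rearrangement. Across
a concatenation, each block on which `γ` and `σ` differ costs at most two extra runs at its
borders.
-/

open List

namespace List

variable {α β ι κ : Type*}

theorem nodup_tails : ∀ l : List α, l.tails.Nodup
  | [] => by simp
  | a :: l => by
    rw [tails_cons, nodup_cons, mem_tails]
    exact ⟨fun h => by simpa using h.length_le, nodup_tails l⟩

theorem lex_append_left_iff {r : α → α → Prop} [Std.Irrefl r] (l : List α) {a b : List α} :
    Lex r (l ++ a) (l ++ b) ↔ Lex r a b := by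
  induction l with
  | nil => rfl
  | cons x l ih => rwa [cons_append, cons_append, lex_cons_iff]

theorem flatMap_map_filter_perm_comm (xs : List ι) (ys : List κ) (P : ι → κ → Prop)
    [∀ x y, Decidable (P x y)] (F : ι → κ → β) :
    xs.flatMap (fun x => (ys.filter fun y => P x y).map (F x)) ~
      ys.flatMap (fun y => (xs.filter fun x => P x y).map (F · y)) := by
  induction xs with
  | nil => simp
  | cons x xs ih =>
    have hx : (ys.filter fun y => P x y).map (F x) =
        ys.flatMap fun y => if P x y then [F x y] else [] := by
      clear ih
      induction ys with
      | nil => rfl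
      | cons y ys ihy => by_cases h : P x y <;> simp [h, ihy]
    rw [flatMap_cons, hx]
    refine ((ih.append_left _).trans (flatMap_append_perm _ _ _)).trans (Perm.flatMap_left _ ?_)
    intro y _
    by_cases h : P x y <;> simp [h]

end List

section Runs

variable {ι δ : Type*} [DecidableEq δ]

/-- The number of runs that `L` adds when appended to a string ending with `c`. -/
def runsAfter : Option δ → List δ → ℕ
  | _, [] => 0
  | c, a :: l => (if c = some a then 0 else 1) + runsAfter (some a) l

theorem length_destutter'_ne (l : List δ) (a : δ) :
    (l.destutter' (· ≠ ·) a).length = 1 + runsAfter (some a) l := by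
  induction l generalizing a with
  | nil => simp [runsAfter]
  | cons b l ih =>
    by_cases h : a = b
    · subst h
      simp [destutter', runsAfter, ih]
    · simp [destutter', h, runsAfter, ih]
      omega

theorem runsAfter_none (L : List δ) : runsAfter none L = runs L := by
  cases L with
  | nil => rfl
  | cons a l => simp [runs, runsAfter, destutter_cons', length_destutter'_ne]

theorem runsAfter_append (c : Option δ) (X Y : List δ) :
    runsAfter c (X ++ Y) = runsAfter c X + runsAfter (X.getLast?.or c) Y := by
  induction X generalizing c with
  | nil => simp [runsAfter]
  | cons a X ih =>
    rw [cons_append, runsAfter, runsAfter, ih, Nat.add_assoc, getLast?_cons]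
    cases X.getLast? <;> rfl

theorem runsAfter_le_runs (c : Option δ) (L : List δ) : runsAfter c L ≤ runs L := by
  rw [← runsAfter_none]
  cases L with
  | nil => rfl
  | cons a l => rw [runsAfter, runsAfter]; split <;> simp

theorem runs_le_runsAfter_add_one (c : Option δ) (L : List δ) : runs L ≤ runsAfter c L + 1 := by
  rw [← runsAfter_none]
  cases L with
  | nil => simp [runsAfter]
  | cons a l => rw [runsAfter, runsAfter]; split <;> omega

theorem runsAfter_le_runsAfter_add_ite (c c' : Option δ) (L : List δ) :
    runsAfter c L ≤ runsAfter c' L + if c = c' then 0 else 1 := by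
  split_ifs with hc
  · rw [hc, add_zero]
  · exact (runsAfter_le_runs c L).trans (runs_le_runsAfter_add_one c' L)

/-- The two concatenations may start after different characters, which costs at most one
run. -/
theorem runsAfter_flatMap_le (l : List ι) (f g : ι → List δ)
    (h : ∀ i ∈ l, runs (f i) ≤ runs (g i)) (c c' : Option δ) :
    runsAfter c (l.flatMap f) ≤ runsAfter c' (l.flatMap g) +
      2 * l.countP (fun i => f i ≠ g i) + if c = c' then 0 else 1 := by
  induction l generalizing c c' with
  | nil => simp [runsAfter]
  | cons i l ih =>
    have ih' := fun c c' => ih (fun j hj => h j (mem_cons_of_mem i hj)) c c'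
    rw [flatMap_cons, flatMap_cons, runsAfter_append, runsAfter_append, countP_cons]
    by_cases hfg : f i = g i
    · rw [← hfg]
      rcases (f i).eq_nil_or_concat' with hnil | ⟨X, v, hX⟩
      · simpa [hnil, runsAfter] using ih' c c'
      · have hblock := runsAfter_le_runsAfter_add_ite c c' (f i)
        have hrest := ih' (some v) (some v)
        simp only [hX, getLast?_concat, Option.some_or, if_true, add_zero, ne_eq,
          not_true_eq_false, decide_false, Bool.false_eq_true, if_false] at hblock hrest ⊢
        omega
    · -- a differing block costs one run at its start and one after its end
      have hblock : runsAfter c (f i) ≤ runsAfter c' (g i) + 1 :=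
        (runsAfter_le_runs c _).trans <| (h i mem_cons_self).trans (runs_le_runsAfter_add_one c' _)
      have hrest := ih' ((f i).getLast?.or c) ((g i).getLast?.or c')
      simp only [hfg, ne_eq, not_false_eq_true, decide_true, if_true] at hrest ⊢
      split at hrest <;> split <;> omega

theorem runs_flatMap_le (l : List ι) (f g : ι → List δ)
    (h : ∀ i ∈ l, runs (f i) ≤ runs (g i)) :
    runs (l.flatMap f) ≤ runs (l.flatMap g) + 2 * l.countP (fun i => f i ≠ g i) := by
  simpa [runsAfter_none] using runsAfter_flatMap_le l f g h none none

theorem length_dedup_le_runs (L : List δ) : L.dedup.length ≤ runs L :=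
  (nodup_dedup L).isChain.length_le_length_destutter_ne (dedup_sublist L)

theorem runs_le_runs_of_perm_of_pairwise_le [PartialOrder δ] {L L' : List δ}
    (hL : L.Pairwise (· ≤ ·)) (hperm : L ~ L') : runs L ≤ runs L' := by
  rw [runs, hL.destutter_eq_dedup, hperm.dedup.length_eq]
  exact length_dedup_le_runs L'

end Runs

theorem listLe_iff_le {β : Type*} [LinearOrder β] {X Y : List β} : listLe X Y ↔ X ≤ Y :=
  le_iff_eq_or_lt.symm

theorem listLe_of_append_left {β : Type*} [Preorder β] {l X Y : List β}
    (h : listLe (l ++ X) (l ++ Y)) : listLe X Y :=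
  h.imp append_cancel_left (lex_append_left_iff l).1

theorem precChar_append_le_of_listLe {α : Type*} [Preorder α] {P Q U : List α}
    (h : listLe (P ++ U).reverse (Q ++ U).reverse) :
    precChar (P ++ U) U ≤ precChar (Q ++ U) U := by
  rw [reverse_append, reverse_append] at h
  replace h := listLe_of_append_left h
  simp only [precChar, length_append, Nat.add_sub_cancel, take_left']
  rcases P.eq_nil_or_concat' with rfl | ⟨P, a, rfl⟩
  · exact bot_le
  rcases Q.eq_nil_or_concat' with rfl | ⟨Q, b, rfl⟩
  · simp [listLe] at h
  simp only [reverse_append, reverse_cons, reverse_nil, nil_append, singleton_append,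
    getLast?_concat, WithBot.coe_le_coe] at h ⊢
  rcases h with h | h
  · exact (cons_eq_cons.1 h).1.le
  · exact head_le_of_lt h

namespace MdolBWT

variable {α : Type*} {k : ℕ}

def chr (a : α) : Fin k ⊕ₗ α := toLex (Sum.inr a)

def sep (p : Fin k) : Fin k ⊕ₗ α := toLex (Sum.inl p)

theorem lex_map_chr_append_sep_of_lex [LT α] {U V : List α} (h : Lex (· < ·) U V) (p q : Fin k)
    (r r' : List (Fin k ⊕ₗ α)) :
    Lex (· < ·) (U.map chr ++ sep p :: r) (V.map chr ++ sep q :: r') := by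
  induction h with
  | nil => exact Lex.rel (Sum.Lex.inl_lt_inr _ _)
  | cons _ ih => exact Lex.cons ih
  | rel h => exact Lex.rel (Sum.Lex.inr_lt_inr_iff.2 h)

theorem lex_map_chr_append_sep_of_lt [LT α] (U : List α) {p q : Fin k} (h : p < q)
    (r r' : List (Fin k ⊕ₗ α)) :
    Lex (· < ·) (U.map chr ++ sep p :: r) (U.map chr ++ sep q :: r') := by
  induction U with
  | nil => exact Lex.rel (Sum.Lex.inl_lt_inl_iff.2 h)
  | cons _ _ ih => exact Lex.cons ih

section Rotations

variable {β γ : Type*}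

/-- The rotations of `A ++ C` that start inside `A`. -/
def rotsIn (A C : List β) : List (List β) :=
  (range A.length).map fun j => A.drop j ++ C ++ A.take j

theorem rotsIn_append (A B C : List β) :
    rotsIn (A ++ B) C = rotsIn A (B ++ C) ++ rotsIn B (C ++ A) := by
  simp only [rotsIn, length_append, range_add, map_append, map_map]
  congr 1
  · refine map_congr_left fun j hj => ?_
    rw [mem_range] at hj
    simp [drop_append_of_le_length hj.le, take_append_of_le_length hj.le]
  · refine map_congr_left fun j _ => ?_
    simp [drop_append, take_append, drop_eq_nil_of_le, take_of_length_le]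

theorem rotsIn_map_append_singleton (f : γ → β) (l : List γ) (s : β) (C : List β) :
    rotsIn (l.map f ++ [s]) C =
      l.tails.map fun U => U.map f ++ s :: (C ++ (l.take (l.length - U.length)).map f) := by
  refine ext_getElem (by simp [rotsIn]) fun j h₁ _ => ?_
  simp only [rotsIn, length_append, length_map, length_singleton, length_range] at h₁
  have hj : j ≤ (l.map f).length := by simpa using Nat.le_of_lt_succ h₁
  simp [rotsIn, drop_append_of_le_length hj, take_append_of_le_length hj,
    Nat.sub_sub_self (Nat.le_of_lt_succ h₁)]

end Rotations

variable (T : Fin k → List α) (σ : Equiv.Perm (Fin k))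

def block (p : Fin k) : List (Fin k ⊕ₗ α) := (T (σ p)).map chr ++ [sep p]

/-- The rotation of `W_σ` starting at the suffix `U` of `T (σ p)`. -/
def suffixRot (p : Fin k) (U : List α) : List (Fin k ⊕ₗ α) :=
  U.map chr ++ sep p :: (((finRange k).drop ((p : ℕ) + 1)).flatMap (block T σ) ++
    ((finRange k).take p).flatMap (block T σ) ++
    ((T (σ p)).take ((T (σ p)).length - U.length)).map chr)

theorem take_drop_finRange_of_eq {pre post : List (Fin k)} {p : Fin k}
    (h : pre ++ p :: post = finRange k) :
    (finRange k).take p = pre ∧ (finRange k).drop ((p : ℕ) + 1) = post := by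
  have hp : (p : ℕ) = pre.length := by
    have hlen : pre.length < (pre ++ p :: post).length := by simp
    simpa using congrArg Fin.val (getElem_of_eq h hlen)
  rw [← h, hp]
  simp

theorem rotsIn_flatMap_block (post pre : List (Fin k)) (h : pre ++ post = finRange k) :
    rotsIn (post.flatMap (block T σ)) (pre.flatMap (block T σ)) =
      post.flatMap fun p => (T (σ p)).tails.map (suffixRot T σ p) := by
  induction post generalizing pre with
  | nil => simp [rotsIn]
  | cons p post ih =>
    obtain ⟨htake, hdrop⟩ := take_drop_finRange_of_eq h
    have hpre : pre.flatMap (block T σ) ++ block T σ p = (pre ++ [p]).flatMap (block T σ) := by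
      simp
    rw [flatMap_cons, flatMap_cons, rotsIn_append, hpre, ih (pre ++ [p]) (by simpa using h)]
    congr 1
    rw [block, rotsIn_map_append_singleton]
    simp [suffixRot, htake, hdrop]

theorem mRots_eq_flatMap :
    mRots T σ = (finRange k).flatMap fun p => (T (σ p)).tails.map (suffixRot T σ p) := by
  rw [← rotsIn_flatMap_block T σ (finRange k) [] rfl, flatMap_nil]
  simp only [rotsIn, mRots, append_nil]
  rfl

theorem lastOut_append_of_lastOut_eq_bot {X : List (Fin k ⊕ₗ α)} (hX : lastOut X = ⊥)
    (Y : List (Fin k ⊕ₗ α)) : lastOut (X ++ Y) = lastOut Y := by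
  rcases Y.eq_nil_or_concat' with rfl | ⟨Y, b, rfl⟩
  · rw [append_nil, hX]
    rfl
  · simp only [lastOut, ← append_assoc, getLast?_concat]

theorem lastOut_append_flatMap_block {X : List (Fin k ⊕ₗ α)} (hX : lastOut X = ⊥)
    (ps : List (Fin k)) : lastOut (X ++ ps.flatMap (block T σ)) = ⊥ := by
  induction ps generalizing X with
  | nil => simpa using hX
  | cons p ps ih =>
    rw [flatMap_cons, ← append_assoc]
    exact ih (by simp [lastOut, block, sep, ← append_assoc])

theorem lastOut_map_chr (l : List α) :
    lastOut (l.map (chr (k := k))) = (l.getLast? : WithBot α) := by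
  rcases l.eq_nil_or_concat' with rfl | ⟨l, a, rfl⟩
  · rfl
  · simp only [lastOut, chr, map_append, map_cons, map_nil, getLast?_concat, ofLex_toLex]
    rfl

theorem lastOut_suffixRot (p : Fin k) (U : List α) :
    lastOut (suffixRot T σ p U) = precChar (T (σ p)) U := by
  have hsep : lastOut (U.map chr ++ [sep p]) = ⊥ := by simp [lastOut, sep]
  have hshape : suffixRot T σ p U = ((U.map chr ++ [sep p] ++
      ((finRange k).drop ((p : ℕ) + 1)).flatMap (block T σ)) ++
      ((finRange k).take p).flatMap (block T σ)) ++
      ((T (σ p)).take ((T (σ p)).length - U.length)).map chr := by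
    simp [suffixRot]
  rw [hshape, lastOut_append_of_lastOut_eq_bot (lastOut_append_flatMap_block T σ
    (lastOut_append_flatMap_block T σ hsep _) _), lastOut_map_chr, precChar]
  cases ((T (σ p)).take ((T (σ p)).length - U.length)).getLast? <;> rfl

section Sorted

variable [LinearOrder α]

def suffixes : List (List α) := (Finset.univ.biUnion fun i => (T i).tails.toFinset).sort

theorem mem_suffixes {U : List α} : U ∈ suffixes T ↔ ∃ i, U <:+ T i := by
  simp [suffixes]

theorem pairwise_lt_suffixes : (suffixes T).Pairwise (· < ·) :=
  (Finset.sortedLT_sort _).pairwise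

theorem tails_perm_filter_suffixes (i : Fin k) :
    (T i).tails ~ (suffixes T).filter (· <:+ T i) := by
  refine (perm_ext_iff_of_nodup (nodup_tails _)
    ((pairwise_lt_suffixes T).nodup.filter _)).2 fun U => ?_
  simp only [mem_tails, mem_filter, mem_suffixes, decide_eq_true_eq]
  exact ⟨fun h => ⟨⟨i, h⟩, h⟩, fun h => h.2⟩

def owners (U : List α) : List (Fin k) := (finRange k).filter fun p => U <:+ T (σ p)

def sortedRots : List (List (Fin k ⊕ₗ α)) :=
  (suffixes T).flatMap fun U => (owners T σ U).map fun p => suffixRot T σ p U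

theorem mRots_perm_sortedRots : mRots T σ ~ sortedRots T σ := by
  rw [mRots_eq_flatMap]
  refine (Perm.flatMap_left _ fun p _ => (tails_perm_filter_suffixes T (σ p)).map _).trans ?_
  exact flatMap_map_filter_perm_comm _ _ (fun p U => U <:+ T (σ p)) (fun p U => suffixRot T σ p U)

theorem pairwise_lt_sortedRots : (sortedRots T σ).Pairwise (· < ·) := by
  rw [sortedRots, pairwise_flatMap]
  refine ⟨fun U _ => ?_, (pairwise_lt_suffixes T).imp fun hUV => ?_⟩
  · rw [pairwise_map]
    exact ((pairwise_lt_finRange k).filter _).imp fun hpq => lex_map_chr_append_sep_of_lt U hpq _ _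
  · simp only [mem_map]
    rintro _ ⟨p, -, rfl⟩ _ ⟨q, -, rfl⟩
    exact lex_map_chr_append_sep_of_lex hUV p q _ _

theorem eq_sortedRots_of_perm {L : List (List (Fin k ⊕ₗ α))} (hperm : L ~ mRots T σ)
    (hsort : L.Pairwise listLe) : L = sortedRots T σ :=
  (hperm.trans (mRots_perm_sortedRots T σ)).eq_of_pairwise' (hsort.imp listLe_iff_le.1)
    ((pairwise_lt_sortedRots T σ).imp le_of_lt)

/-- The output of the BWT on the interval of rotations starting with `U·$`. -/
def intervalBWT (U : List α) : List (WithBot α) :=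
  (owners T σ U).map fun p => precChar (T (σ p)) U

theorem mdolOf_sortedRots : mdolOf (sortedRots T σ) = (suffixes T).flatMap (intervalBWT T σ) := by
  simp only [mdolOf, sortedRots, map_flatMap, map_map, Function.comp_def, lastOut_suffixRot]
  rfl

theorem mdolOf_eq_of_perm {L : List (List (Fin k ⊕ₗ α))} (hperm : L ~ mRots T σ)
    (hsort : L.Pairwise listLe) : mdolOf L = (suffixes T).flatMap (intervalBWT T σ) := by
  rw [eq_sortedRots_of_perm T σ hperm hsort, mdolOf_sortedRots]

theorem map_owners_perm (U : List α) :
    (owners T σ U).map σ ~ (finRange k).filter fun i => U <:+ T i := by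
  refine (perm_ext_iff_of_nodup (((nodup_finRange k).filter _).map σ.injective)
    ((nodup_finRange k).filter _)).2 fun i => ?_
  simp only [mem_map, mem_filter, mem_finRange, true_and, decide_eq_true_eq]
  exact ⟨fun ⟨p, hp, hpi⟩ => hpi ▸ hp,
    fun h => ⟨σ.symm i, by simpa using h, σ.apply_symm_apply i⟩⟩

theorem intervalBWT_perm (τ : Equiv.Perm (Fin k)) (U : List α) :
    intervalBWT T σ U ~ intervalBWT T τ U := by
  have h (ρ : Equiv.Perm (Fin k)) :
      intervalBWT T ρ U = ((owners T ρ U).map ρ).map fun i => precChar (T i) U := by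
    simp [intervalBWT, Function.comp_def]
  rw [h σ, h τ]
  exact ((map_owners_perm T σ U).trans (map_owners_perm T τ U).symm).map _

theorem pairwise_eq_intervalBWT {U : List α} (hU : ¬ Interesting T U) :
    (intervalBWT T σ U).Pairwise (· = ·) := by
  refine pairwise_of_forall_mem_list ?_
  simp only [intervalBWT, owners, mem_map, mem_filter, mem_finRange, true_and, decide_eq_true_eq]
  rintro _ ⟨p, hp, rfl⟩ _ ⟨q, hq, rfl⟩
  by_cases hpq : σ p = σ q
  · rw [hpq]
  · by_contra hne
    exact hU ⟨σ p, σ q, hpq, hp, hq, hne⟩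

theorem intervalBWT_eq_of_not_interesting (τ : Equiv.Perm (Fin k)) {U : List α}
    (hU : ¬ Interesting T U) : intervalBWT T σ U = intervalBWT T τ U :=
  (intervalBWT_perm T σ τ U).eq_of_pairwise' ((pairwise_eq_intervalBWT T σ hU).imp le_of_eq)
    ((pairwise_eq_intervalBWT T τ hU).imp le_of_eq)

theorem pairwise_le_intervalBWT_of_colex {γ : Equiv.Perm (Fin k)}
    (hcolex : ∀ p q : Fin k, p ≤ q → listLe (T (γ p)).reverse (T (γ q)).reverse)
    (U : List α) :
    (intervalBWT T γ U).Pairwise (· ≤ ·) := by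
  rw [intervalBWT, pairwise_map]
  refine ((pairwise_lt_finRange k).filter _).imp_of_mem fun {p q} hp hq hpq => ?_
  simp only [owners, mem_filter, mem_finRange, true_and, decide_eq_true_eq] at hp hq
  obtain ⟨P, hP⟩ := hp
  obtain ⟨Q, hQ⟩ := hq
  have := hcolex p q hpq.le
  rw [← hP, ← hQ] at this ⊢
  exact precChar_append_le_of_listLe this

theorem runs_intervalBWT_le_of_colex {γ : Equiv.Perm (Fin k)}
    (hcolex : ∀ p q : Fin k, p ≤ q → listLe (T (γ p)).reverse (T (γ q)).reverse)
    (U : List α) :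
    runs (intervalBWT T γ U) ≤ runs (intervalBWT T σ U) :=
  runs_le_runs_of_perm_of_pairwise_le (pairwise_le_intervalBWT_of_colex T hcolex U)
    (intervalBWT_perm T γ σ U)

theorem countP_intervalBWT_ne_le_card (τ : Equiv.Perm (Fin k)) {𝒰 : Finset (List α)}
    (h𝒰 : ∀ U, Interesting T U → U ∈ 𝒰) :
    (suffixes T).countP (fun U => intervalBWT T σ U ≠ intervalBWT T τ U) ≤ 𝒰.card := by
  rw [countP_eq_length_filter, ← toFinset_card_of_nodup ((pairwise_lt_suffixes T).nodup.filter _)]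
  refine Finset.card_le_card fun U hU => h𝒰 U ?_
  simp only [mem_toFinset, mem_filter, decide_eq_true_eq] at hU
  exact not_not.1 (mt (intervalBWT_eq_of_not_interesting T σ τ) hU.2)

end Sorted

end MdolBWT

open MdolBWT in
theorem colexBWT_runs_le_opt_add_general {α : Type*} [LinearOrder α]
    (k : ℕ) (T : Fin k → List α)
    (γ : Equiv.Perm (Fin k))
    (hcolex : ∀ p q : Fin k, p ≤ q → listLe (T (γ p)).reverse (T (γ q)).reverse)
    (𝒰 : Finset (List α)) (h𝒰 : ∀ U, U ∈ 𝒰 ↔ Interesting T U)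
    (Lγ : List (List (Fin k ⊕ₗ α))) (hpermγ : Lγ.Perm (mRots T γ))
    (hsortγ : Lγ.Pairwise listLe)
    (σ : Equiv.Perm (Fin k))
    (Lσ : List (List (Fin k ⊕ₗ α))) (hpermσ : Lσ.Perm (mRots T σ))
    (hsortσ : Lσ.Pairwise listLe) :
    runs (mdolOf Lγ) ≤ runs (mdolOf Lσ) + 2 * 𝒰.card := by
  rw [mdolOf_eq_of_perm T γ hpermγ hsortγ, mdolOf_eq_of_perm T σ hpermσ hsortσ]
  calc runs ((suffixes T).flatMap (intervalBWT T γ))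
      ≤ runs ((suffixes T).flatMap (intervalBWT T σ)) +
          2 * (suffixes T).countP (fun U => intervalBWT T γ U ≠ intervalBWT T σ U) :=
        runs_flatMap_le _ _ _ fun U _ => runs_intervalBWT_le_of_colex T σ hcolex U
    _ ≤ runs ((suffixes T).flatMap (intervalBWT T σ)) + 2 * 𝒰.card := by
        gcongr
        exact countP_intervalBWT_ne_le_card T γ σ fun U => (h𝒰 U).2

/-- Let `γ` be a permutation arranging the strings of `M` in
colexicographic order (the reversed strings `T_{γ(1)}^rev,…,T_{γ(k)}^rev` are in
lexicographic order).  Then `runs(mdolBWT(M,γ)) ≤ r_OPT + 2·c_M`, where `r_OPT` is the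
minimum of `runs(mdolBWT(M,σ))` over all permutations `σ` and `c_M` is the number of
interesting intervals of `M` (the cardinality of the set `𝒰` of shared suffixes
defining them); equivalently, the bound holds against every permutation `σ`. -/
theorem colexBWT_runs_le_opt_add {α : Type*} [LinearOrder α]
    (k : ℕ) (hk : 2 ≤ k) (T : Fin k → List α) (hT : ∀ i, T i ≠ [])
    (γ : Equiv.Perm (Fin k))
    (hcolex : ∀ p q : Fin k, p ≤ q → listLe (T (γ p)).reverse (T (γ q)).reverse)
    (𝒰 : Finset (List α)) (h𝒰 : ∀ U, U ∈ 𝒰 ↔ Interesting T U)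
    (Lγ : List (List (Fin k ⊕ₗ α))) (hpermγ : Lγ.Perm (mRots T γ))
    (hsortγ : Lγ.Pairwise listLe)
    (σ : Equiv.Perm (Fin k))
    (Lσ : List (List (Fin k ⊕ₗ α))) (hpermσ : Lσ.Perm (mRots T σ))
    (hsortσ : Lσ.Pairwise listLe) :
    runs (mdolOf Lγ) ≤ runs (mdolOf Lσ) + 2 * 𝒰.card :=
  colexBWT_runs_le_opt_add_general k T γ hcolex 𝒰 h𝒰 Lγ hpermγ hsortγ σ Lσ hpermσ hsortσ
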